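/- Let X be a random vector in ℝ^k with E[X Xᵀ] = I and ‖X‖² ≤ Bk almost surely for some constant B, and assume that |E[X]ᵀ E[X]| is bounded. Then for independent copies X₃, X₄ of X, Q₃₄ = X₃X₃ᵀ + X₄X₄ᵀ and any positive integer j, |E[X₃ᵀ Q₃₄^j X₄]| ≲ k^j. -/

import Mathlib

open MeasureTheory ProbabilityTheory Matrix

lemma vmv_mulVec {k : ℕ} (u v w : Fin k → ℝ) :
    (Matrix.vecMulVec u v).mulVec w = (v ⬝ᵥ w) • u := by
  ext i
  simp only [Matrix.mulVec, Matrix.vecMulVec_apply, dotProduct, Pi.smul_apply,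
    smul_eq_mul, Finset.sum_mul]
  exact Finset.sum_congr rfl fun j _ => by ring

noncomputable def mEval (m : ℕ × ℕ × ℕ) (s t r : ℝ) : ℝ := s ^ m.1 * t ^ m.2.1 * r ^ m.2.2

def polys : ℕ → Multiset (ℕ × ℕ × ℕ) × Multiset (ℕ × ℕ × ℕ)
  | 0 => (0, {(0,0,0)})
  | n+1 =>
    ((polys n).1.map (fun m => (m.1+1, m.2.1, m.2.2)) +
       (polys n).2.map (fun m => (m.1, m.2.1, m.2.2+1)),
     (polys n).1.map (fun m => (m.1, m.2.1, m.2.2+1)) +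
       (polys n).2.map (fun m => (m.1, m.2.1+1, m.2.2)))

lemma key_alg {k : ℕ} (y z : Fin k → ℝ) (n : ℕ) :
    ((Matrix.vecMulVec y y + Matrix.vecMulVec z z) ^ n).mulVec z
      = ((polys n).1.map (fun m => mEval m (y ⬝ᵥ y) (z ⬝ᵥ z) (y ⬝ᵥ z))).sum • y
        + ((polys n).2.map (fun m => mEval m (y ⬝ᵥ y) (z ⬝ᵥ z) (y ⬝ᵥ z))).sum • z := by
  set s := y ⬝ᵥ y with hs; set t := z ⬝ᵥ z with ht; set r := y ⬝ᵥ z with hr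
  induction n with
  | zero => simp [polys, mEval]
  | succ n ih =>
    have hQy : (Matrix.vecMulVec y y + Matrix.vecMulVec z z) *ᵥ y = s • y + r • z := by
      rw [Matrix.add_mulVec, vmv_mulVec, vmv_mulVec, dotProduct_comm z y]
    have hQz : (Matrix.vecMulVec y y + Matrix.vecMulVec z z) *ᵥ z = r • y + t • z := by
      rw [Matrix.add_mulVec, vmv_mulVec, vmv_mulVec]
    set A := ((polys n).1.map (fun m => mEval m s t r)).sum with hA
    set Bc := ((polys n).2.map (fun m => mEval m s t r)).sum with hB
    have e1 : ((polys (n+1)).1.map (fun m => mEval m s t r)).sum = s * A + r * Bc := by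
      simp only [polys, Multiset.map_add, Multiset.sum_add, Multiset.map_map, Function.comp,
        hA, hB, ← Multiset.sum_map_mul_left]
      congr 1 <;> exact congrArg _ (Multiset.map_congr rfl fun m _ => by
        simp only [mEval, pow_succ]; ring)
    have e2 : ((polys (n+1)).2.map (fun m => mEval m s t r)).sum = r * A + t * Bc := by
      simp only [polys, Multiset.map_add, Multiset.sum_add, Multiset.map_map, Function.comp,
        hA, hB, ← Multiset.sum_map_mul_left]
      congr 1 <;> exact congrArg _ (Multiset.map_congr rfl fun m _ => by
        simp only [mEval, pow_succ]; ring)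
    rw [pow_succ', ← Matrix.mulVec_mulVec, ih, e1, e2, Matrix.mulVec_add,
      Matrix.mulVec_smul, Matrix.mulVec_smul, hQy, hQz]
    ext i
    simp only [Pi.add_apply, Pi.smul_apply, smul_eq_mul]
    ring

lemma key_dot {k : ℕ} (y z : Fin k → ℝ) (n : ℕ) :
    y ⬝ᵥ (((Matrix.vecMulVec y y + Matrix.vecMulVec z z) ^ n).mulVec z)
      = ((polys (n+1)).1.map (fun m => mEval m (y ⬝ᵥ y) (z ⬝ᵥ z) (y ⬝ᵥ z))).sum := by
  set s := y ⬝ᵥ y with hs; set t := z ⬝ᵥ z with ht; set r := y ⬝ᵥ z with hr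
  rw [key_alg, dotProduct_add, dotProduct_smul, dotProduct_smul]
  simp only [polys, Multiset.map_add, Multiset.sum_add, Multiset.map_map, Function.comp,
    ← Multiset.sum_map_mul_left]
  have c1 : Multiset.map (fun m => mEval ((m:ℕ×ℕ×ℕ).1+1, m.2.1, m.2.2) s t r) (polys n).1
      = Multiset.map (fun m => s * mEval m s t r) (polys n).1 :=
    Multiset.map_congr rfl fun m _ => by simp only [mEval, pow_succ]; ring
  have c2 : Multiset.map (fun m => mEval ((m:ℕ×ℕ×ℕ).1, m.2.1, m.2.2+1) s t r) (polys n).2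
      = Multiset.map (fun m => r * mEval m s t r) (polys n).2 :=
    Multiset.map_congr rfl fun m _ => by simp only [mEval, pow_succ]; ring
  rw [c1, c2, Multiset.sum_map_mul_left, Multiset.sum_map_mul_left]
  simp [smul_eq_mul, ← hs, ← hr]
  ring

lemma polys_card (n : ℕ) : (polys n).1.card ≤ 2^n ∧ (polys n).2.card ≤ 2^n := by
  induction n with
  | zero => simp [polys]
  | succ n ih =>
    simp only [polys, Multiset.card_add, Multiset.card_map, pow_succ]
    omega

lemma polys_deg (n : ℕ) :
    (∀ m ∈ (polys n).1, m.1 + m.2.1 + m.2.2 = n ∧ Odd m.2.2) ∧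
    (∀ m ∈ (polys n).2, m.1 + m.2.1 + m.2.2 = n ∧ Even m.2.2) := by
  induction n with
  | zero =>
    constructor
    · intro m hm; simp [polys] at hm
    · intro m hm; simp [polys] at hm; subst hm; simp
  | succ n ih =>
    constructor
    · intro m hm
      simp only [polys, Multiset.mem_add, Multiset.mem_map] at hm
      rcases hm with ⟨a, ha, rfl⟩ | ⟨a, ha, rfl⟩
      · obtain ⟨h1, h2⟩ := ih.1 a ha; exact ⟨by dsimp only; omega, h2⟩
      · obtain ⟨h1, h2⟩ := ih.2 a ha; exact ⟨by dsimp only; omega, h2.add_one⟩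
    · intro m hm
      simp only [polys, Multiset.mem_add, Multiset.mem_map] at hm
      rcases hm with ⟨a, ha, rfl⟩ | ⟨a, ha, rfl⟩
      · obtain ⟨h1, h2⟩ := ih.1 a ha; exact ⟨by dsimp only; omega, h2.add_one⟩
      · obtain ⟨h1, h2⟩ := ih.2 a ha; exact ⟨by dsimp only; omega, h2⟩

section Helpers

variable {Ω : Type} [MeasurableSpace Ω] {μ : Measure Ω}

lemma integrable_bdd [IsFiniteMeasure μ] {f : Ω → ℝ} (hf : Measurable f) {c : ℝ}
    (h : ∀ᵐ ω ∂μ, |f ω| ≤ c) : Integrable f μ :=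
  ⟨hf.aestronglyMeasurable, HasFiniteIntegral.of_bounded (C := c)
    (by simpa [Real.norm_eq_abs] using h)⟩

lemma multiset_integral_sum {ι : Type} (l : Multiset ι) (g : ι → Ω → ℝ)
    (h : ∀ i ∈ l, Integrable (g i) μ) :
    Integrable (fun ω => (l.map (fun i => g i ω)).sum) μ ∧
      ∫ ω, (l.map (fun i => g i ω)).sum ∂μ = (l.map (fun i => ∫ ω, g i ω ∂μ)).sum := by
  induction l using Multiset.induction with
  | empty => simpa using integrable_const (0:ℝ)
  | cons a s ih =>
    have hs := ih (fun i hi => h i (Multiset.mem_cons_of_mem hi))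
    have ha := h a (Multiset.mem_cons_self _ _)
    simp only [Multiset.map_cons, Multiset.sum_cons]
    exact ⟨ha.add hs.1, by rw [integral_add ha hs.1, hs.2]⟩

lemma multiset_abs_sum_le {ι : Type} (l : Multiset ι) (f : ι → ℝ) {c : ℝ} (hc : 0 ≤ c)
    (h : ∀ i ∈ l, |f i| ≤ c) : |(l.map f).sum| ≤ l.card * c := by
  induction l using Multiset.induction with
  | empty => simp
  | cons a s ih =>
    have hs := ih (fun i hi => h i (Multiset.mem_cons_of_mem hi))
    have ha := h a (Multiset.mem_cons_self _ _)
    simp only [Multiset.map_cons, Multiset.sum_cons, Multiset.card_cons]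
    calc |f a + (Multiset.map f s).sum| ≤ |f a| + |(Multiset.map f s).sum| := abs_add_le _ _
      _ ≤ c + s.card * c := add_le_add ha hs
      _ = (s.card + 1) * c := by ring
      _ = ((s.card + 1 : ℕ) : ℝ) * c := by push_cast; ring

lemma integral_cs {f g : Ω → ℝ} (hf2 : Integrable (fun ω => f ω ^ 2) μ)
    (hg2 : Integrable (fun ω => g ω ^ 2) μ) (hfg : Integrable (fun ω => f ω * g ω) μ) :
    (∫ ω, f ω * g ω ∂μ) ^ 2 ≤ (∫ ω, f ω ^ 2 ∂μ) * ∫ ω, g ω ^ 2 ∂μ := by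
  set A := ∫ ω, f ω * g ω ∂μ with hA
  set C := ∫ ω, f ω ^ 2 ∂μ with hC
  set D := ∫ ω, g ω ^ 2 ∂μ with hD
  have hCnn : 0 ≤ C := integral_nonneg fun ω => sq_nonneg _
  have hDnn : 0 ≤ D := integral_nonneg fun ω => sq_nonneg _
  rcases eq_or_lt_of_le hCnn with hC0 | hCpos
  · -- C = 0 : f = 0 a.e.
    have hf0 : (fun ω => f ω ^ 2) =ᵐ[μ] 0 := by
      refine (integral_eq_zero_iff_of_nonneg (fun ω => sq_nonneg _) hf2).mp hC0.symm
    have hfg0 : (fun ω => f ω * g ω) =ᵐ[μ] 0 := by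
      filter_upwards [hf0] with ω hω
      have : f ω = 0 := by
        have := hω
        simpa [pow_eq_zero_iff] using hω
      simp [this]
    have hA0 : A = 0 := by rw [hA, integral_congr_ae hfg0]; simp
    rw [hA0, ← hC0]
    simp
  · have key : 0 ≤ ∫ ω, (A * f ω - C * g ω) ^ 2 ∂μ := integral_nonneg fun ω => sq_nonneg _
    have expand : ∫ ω, (A * f ω - C * g ω) ^ 2 ∂μ
        = A ^ 2 * C - 2 * (A * C) * A + C ^ 2 * D := by
      have h1 : Integrable (fun ω => A ^ 2 * f ω ^ 2) μ := hf2.const_mul _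
      have h2 : Integrable (fun ω => 2 * (A * C) * (f ω * g ω)) μ := hfg.const_mul _
      have h3 : Integrable (fun ω => C ^ 2 * g ω ^ 2) μ := hg2.const_mul _
      have : (fun ω => (A * f ω - C * g ω) ^ 2)
          = fun ω => A ^ 2 * f ω ^ 2 - 2 * (A * C) * (f ω * g ω) + C ^ 2 * g ω ^ 2 := by
        funext ω; ring
      have h12 : Integrable (fun ω => A ^ 2 * f ω ^ 2 - 2 * (A * C) * (f ω * g ω)) μ :=
        h1.sub h2
      rw [this, integral_add h12 h3, integral_sub h1 h2,
        MeasureTheory.integral_const_mul, MeasureTheory.integral_const_mul, MeasureTheory.integral_const_mul, ← hA, ← hC, ← hD]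
    rw [expand] at key
    nlinarith [hCpos]

end Helpers

section Core

variable {Ω : Type} [MeasurableSpace Ω] {μ : Measure Ω} {k : ℕ} {B : ℝ}

lemma meas_coord {W : Ω → Fin k → ℝ} (hW : Measurable W) (a : Fin k) :
    Measurable fun ω => W ω a := (measurable_pi_apply a).comp hW

lemma meas_dot {W V : Ω → Fin k → ℝ} (hW : Measurable W) (hV : Measurable V) :
    Measurable fun ω => dotProduct (W ω) (V ω) := by
  simp only [dotProduct]
  exact Finset.measurable_sum _ fun a _ => (meas_coord hW a).mul (meas_coord hV a)

lemma dot_self_eq_sum_sq (w : Fin k → ℝ) : dotProduct w w = ∑ a, w a ^ 2 :=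
  Finset.sum_congr rfl fun a _ => (pow_two (w a)).symm

lemma asbound {W : Ω → Fin k → ℝ} (hb : ∀ᵐ ω ∂μ, ∑ a, W ω a ^ 2 ≤ B * k) :
    ∀ᵐ ω ∂μ, 0 ≤ dotProduct (W ω) (W ω) ∧ dotProduct (W ω) (W ω) ≤ B * k ∧
      ∀ a, |W ω a| ≤ 1 + B * k := by
  filter_upwards [hb] with ω hω
  rw [dot_self_eq_sum_sq]
  refine ⟨Finset.sum_nonneg fun a _ => sq_nonneg _, hω, fun a => ?_⟩
  have h1 : W ω a ^ 2 ≤ B * k :=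
    le_trans (Finset.single_le_sum (fun i _ => sq_nonneg (W ω i)) (Finset.mem_univ a)) hω
  nlinarith [abs_nonneg (W ω a), sq_abs (W ω a)]

lemma norm_Ev_le [IsProbabilityMeasure μ] (hB : 0 < B) {W : Ω → Fin k → ℝ}
    (hW : Measurable W)
    (hiso : ∀ a b, ∫ ω, W ω a * W ω b ∂μ = if a = b then 1 else 0)
    (hb : ∀ᵐ ω ∂μ, ∑ a, W ω a ^ 2 ≤ B * k) (α : ℕ) (v : Fin k → ℝ)
    (hv : ∀ a, v a = ∫ ω, dotProduct (W ω) (W ω) ^ α * W ω a ∂μ) :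
    ∑ a, v a ^ 2 ≤ ((B * k) ^ α) ^ 2 := by
  have hBk : 0 ≤ B * k := by positivity
  set S : Ω → ℝ := fun ω => dotProduct (W ω) (W ω) with hS
  have mS : Measurable S := meas_dot hW hW
  have pack := asbound (μ := μ) (B := B) hb
  set N := ∑ a, v a ^ 2 with hN
  have hNnn : 0 ≤ N := Finset.sum_nonneg fun a _ => sq_nonneg _
  have int1 : ∀ a : Fin k, Integrable (fun ω => S ω ^ α * W ω a) μ := by
    intro a
    refine integrable_bdd ((mS.pow_const α).mul (meas_coord hW a))
      (c := (B * k) ^ α * (1 + B * k)) ?_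
    filter_upwards [pack] with ω ⟨h0, h1, h2⟩
    rw [abs_mul, abs_pow]
    exact mul_le_mul (pow_le_pow_left₀ (abs_nonneg _) (by rwa [abs_of_nonneg h0]) α)
      (h2 a) (abs_nonneg _) (by positivity)
  have intWW : ∀ a b : Fin k, Integrable (fun ω => W ω a * W ω b) μ := by
    intro a b
    refine integrable_bdd ((meas_coord hW a).mul (meas_coord hW b))
      (c := (1 + B * k) * (1 + B * k)) ?_
    filter_upwards [pack] with ω ⟨h0, h1, h2⟩
    rw [abs_mul]
    exact mul_le_mul (h2 a) (h2 b) (abs_nonneg _) (by positivity)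
  set g : Ω → ℝ := fun ω => ∑ a, v a * W ω a with hg
  have mg : Measurable g := Finset.measurable_sum _ fun a _ => (meas_coord hW a).const_mul _
  have gbound : ∀ᵐ ω ∂μ, |g ω| ≤ (∑ a, |v a|) * (1 + B * k) := by
    filter_upwards [pack] with ω ⟨h0, h1, h2⟩
    calc |g ω| ≤ ∑ a, |v a * W ω a| := Finset.abs_sum_le_sum_abs _ _
      _ ≤ ∑ a, |v a| * (1 + B * k) := by
          refine Finset.sum_le_sum fun a _ => ?_
          rw [abs_mul]
          exact mul_le_mul_of_nonneg_left (h2 a) (abs_nonneg _)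
      _ = _ := by rw [← Finset.sum_mul]
  have intg2 : Integrable (fun ω => g ω ^ 2) μ := by
    refine integrable_bdd (mg.pow_const 2) (c := ((∑ a, |v a|) * (1 + B * k)) ^ 2) ?_
    filter_upwards [gbound] with ω h
    calc |g ω ^ 2| = |g ω| ^ 2 := by rw [abs_pow]
      _ ≤ _ := pow_le_pow_left₀ (abs_nonneg _) h 2
  have intSg : Integrable (fun ω => S ω ^ α * g ω) μ := by
    refine integrable_bdd ((mS.pow_const α).mul mg)
      (c := (B * k) ^ α * ((∑ a, |v a|) * (1 + B * k))) ?_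
    filter_upwards [pack, gbound] with ω ⟨h0, h1, _⟩ h
    rw [abs_mul, abs_pow]
    exact mul_le_mul (pow_le_pow_left₀ (abs_nonneg _) (by rwa [abs_of_nonneg h0]) α) h
      (abs_nonneg _) (by positivity)
  have intS2 : Integrable (fun ω => (S ω ^ α) ^ 2) μ := by
    refine integrable_bdd ((mS.pow_const α).pow_const 2) (c := ((B * k) ^ α) ^ 2) ?_
    filter_upwards [pack] with ω ⟨h0, h1, _⟩
    rw [abs_pow, abs_pow, abs_of_nonneg h0]
    exact pow_le_pow_left₀ (by positivity) (pow_le_pow_left₀ h0 h1 α) 2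
  have e1 : ∫ ω, S ω ^ α * g ω ∂μ = N := by
    have hpt : ∀ ω, S ω ^ α * g ω = ∑ a, v a * (S ω ^ α * W ω a) := by
      intro ω
      rw [hg, Finset.mul_sum]
      exact Finset.sum_congr rfl fun a _ => by ring
    simp_rw [hpt]
    rw [integral_finset_sum _ fun a _ => (int1 a).const_mul _, hN]
    refine Finset.sum_congr rfl fun a _ => ?_
    rw [MeasureTheory.integral_const_mul, ← hv a, pow_two]
  have e2 : ∫ ω, g ω ^ 2 ∂μ = N := by
    have hpt : ∀ ω, g ω ^ 2 = ∑ a, ∑ b, v a * v b * (W ω a * W ω b) := by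
      intro ω
      rw [hg, pow_two, Finset.sum_mul_sum]
      exact Finset.sum_congr rfl fun a _ => Finset.sum_congr rfl fun b _ => by ring
    simp_rw [hpt]
    rw [integral_finset_sum _ fun a _ =>
      integrable_finset_sum _ fun b _ => ((intWW a b).const_mul _), hN]
    refine Finset.sum_congr rfl fun a _ => ?_
    rw [integral_finset_sum _ fun b _ => ((intWW a b).const_mul _)]
    have : ∀ b, ∫ ω, v a * v b * (W ω a * W ω b) ∂μ = v a * v b * if a = b then 1 else 0 :=
      fun b => by rw [MeasureTheory.integral_const_mul, hiso a b]
    simp_rw [this]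
    simp [mul_ite, Finset.sum_ite_eq, pow_two]
  have e3 : ∫ ω, (S ω ^ α) ^ 2 ∂μ ≤ ((B * k) ^ α) ^ 2 := by
    have hc : ∫ ω, (((B * k) ^ α) ^ 2 : ℝ) ∂μ = ((B * k) ^ α) ^ 2 := by simp
    rw [← hc]
    refine integral_mono_ae intS2 (integrable_const _) ?_
    filter_upwards [pack] with ω ⟨h0, h1, _⟩
    exact pow_le_pow_left₀ (by positivity) (pow_le_pow_left₀ h0 h1 α) 2
  have cs := integral_cs (μ := μ) (f := fun ω => S ω ^ α) (g := g) intS2 intg2 intSg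
  rw [e1, e2] at cs
  rcases hNnn.eq_or_lt with h | h
  · rw [← h]; positivity
  · have hfin : N * N ≤ ((B * k) ^ α) ^ 2 * N :=
      calc N * N = N ^ 2 := (pow_two N).symm
        _ ≤ (∫ ω, (S ω ^ α) ^ 2 ∂μ) * N := cs
        _ ≤ ((B * k) ^ α) ^ 2 * N := mul_le_mul_of_nonneg_right e3 hNnn
    exact le_of_mul_le_mul_right hfin h

end Core
section Cross

variable {Ω : Type} [MeasurableSpace Ω] {μ : Measure Ω} {k : ℕ} {B : ℝ}

lemma cross_bound (hB : 0 < B) {Y Z : Ω → Fin k → ℝ}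
    (hbY : ∀ᵐ ω ∂μ, ∑ a, Y ω a ^ 2 ≤ B * k) (hbZ : ∀ᵐ ω ∂μ, ∑ a, Z ω a ^ 2 ≤ B * k) :
    ∀ᵐ ω ∂μ, |dotProduct (Y ω) (Z ω)| ≤ B * k := by
  have hBk : (0:ℝ) ≤ B * k := by positivity
  filter_upwards [asbound (μ := μ) (B := B) hbY, asbound (μ := μ) (B := B) hbZ]
    with ω ⟨hY0, hY1, _⟩ ⟨hZ0, hZ1, _⟩
  have hcs : dotProduct (Y ω) (Z ω) ^ 2
      ≤ dotProduct (Y ω) (Y ω) * dotProduct (Z ω) (Z ω) := by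
    rw [dot_self_eq_sum_sq, dot_self_eq_sum_sq]
    exact Finset.sum_mul_sq_le_sq_mul_sq Finset.univ (Y ω) (Z ω)
  nlinarith [abs_nonneg (dotProduct (Y ω) (Z ω)),
    sq_abs (dotProduct (Y ω) (Z ω))]

lemma er2 [IsProbabilityMeasure μ] (hB : 0 < B) {Y Z : Ω → Fin k → ℝ}
    (hY : Measurable Y) (hZ : Measurable Z) (hind : IndepFun Y Z μ)
    (hisoY : ∀ a b, ∫ ω, Y ω a * Y ω b ∂μ = if a = b then 1 else 0)
    (hisoZ : ∀ a b, ∫ ω, Z ω a * Z ω b ∂μ = if a = b then 1 else 0)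
    (hbY : ∀ᵐ ω ∂μ, ∑ a, Y ω a ^ 2 ≤ B * k)
    (hbZ : ∀ᵐ ω ∂μ, ∑ a, Z ω a ^ 2 ≤ B * k) :
    ∫ ω, dotProduct (Y ω) (Z ω) ^ 2 ∂μ = k := by
  have packY := asbound (μ := μ) (B := B) hbY
  have packZ := asbound (μ := μ) (B := B) hbZ
  have intYY : ∀ a b : Fin k, Integrable (fun ω => Y ω a * Y ω b) μ := by
    intro a b
    refine integrable_bdd ((meas_coord hY a).mul (meas_coord hY b))
      (c := (1 + B * k) * (1 + B * k)) ?_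
    filter_upwards [packY] with ω ⟨_, _, h2⟩
    rw [abs_mul]
    exact mul_le_mul (h2 a) (h2 b) (abs_nonneg _) (by positivity)
  have intZZ : ∀ a b : Fin k, Integrable (fun ω => Z ω a * Z ω b) μ := by
    intro a b
    refine integrable_bdd ((meas_coord hZ a).mul (meas_coord hZ b))
      (c := (1 + B * k) * (1 + B * k)) ?_
    filter_upwards [packZ] with ω ⟨_, _, h2⟩
    rw [abs_mul]
    exact mul_le_mul (h2 a) (h2 b) (abs_nonneg _) (by positivity)
  have intT : ∀ a b : Fin k, Integrable (fun ω => Y ω a * Y ω b * (Z ω a * Z ω b)) μ := by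
    intro a b
    refine integrable_bdd
      (((meas_coord hY a).mul (meas_coord hY b)).mul ((meas_coord hZ a).mul (meas_coord hZ b)))
      (c := (1 + B * k) * (1 + B * k) * ((1 + B * k) * (1 + B * k))) ?_
    filter_upwards [packY, packZ] with ω ⟨_, _, h2⟩ ⟨_, _, h2'⟩
    rw [abs_mul, abs_mul, abs_mul]
    exact mul_le_mul (mul_le_mul (h2 a) (h2 b) (abs_nonneg _) (by positivity))
      (mul_le_mul (h2' a) (h2' b) (abs_nonneg _) (by positivity))
      (mul_nonneg (abs_nonneg _) (abs_nonneg _)) (by positivity)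
  have hpt : ∀ ω, dotProduct (Y ω) (Z ω) ^ 2
      = ∑ a, ∑ b, Y ω a * Y ω b * (Z ω a * Z ω b) := by
    intro ω
    rw [dotProduct, pow_two, Finset.sum_mul_sum]
    exact Finset.sum_congr rfl fun a _ => Finset.sum_congr rfl fun b _ => by ring
  simp_rw [hpt]
  rw [integral_finset_sum _ fun a _ => integrable_finset_sum _ fun b _ => intT a b]
  have key : ∀ a b : Fin k, ∫ ω, Y ω a * Y ω b * (Z ω a * Z ω b) ∂μ
      = (if a = b then (1:ℝ) else 0) * (if a = b then (1:ℝ) else 0) := by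
    intro a b
    have hu : Measurable fun x : Fin k → ℝ => x a * x b :=
      (measurable_pi_apply a).mul (measurable_pi_apply b)
    have hI : IndepFun (fun ω => Y ω a * Y ω b) (fun ω => Z ω a * Z ω b) μ :=
      hind.comp hu hu
    have h := hI.integral_fun_mul_eq_mul_integral (intYY a b).aestronglyMeasurable (intZZ a b).aestronglyMeasurable
    rw [hisoY a b, hisoZ a b] at h
    exact h
  have hite : ∀ a b : Fin k, (if a = b then (1:ℝ) else 0) * (if a = b then (1:ℝ) else 0)
      = if a = b then (1:ℝ) else 0 := by intro a b; split <;> simp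
  have step : ∀ a : Fin k, ∫ ω, ∑ b, Y ω a * Y ω b * (Z ω a * Z ω b) ∂μ = 1 := by
    intro a
    rw [integral_finset_sum _ fun b _ => intT a b]
    simp_rw [key, hite]
    simp [Finset.sum_ite_eq]
  simp_rw [step]
  simp

end Cross
section MonBounds

variable {Ω : Type} [MeasurableSpace Ω] {μ : Measure Ω} {k : ℕ} {B : ℝ}

lemma mon_bound_one [IsProbabilityMeasure μ] (hB : 0 < B) {Y Z : Ω → Fin k → ℝ}
    (hY : Measurable Y) (hZ : Measurable Z) (hind : IndepFun Y Z μ)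
    (hisoY : ∀ a b, ∫ ω, Y ω a * Y ω b ∂μ = if a = b then 1 else 0)
    (hisoZ : ∀ a b, ∫ ω, Z ω a * Z ω b ∂μ = if a = b then 1 else 0)
    (hbY : ∀ᵐ ω ∂μ, ∑ a, Y ω a ^ 2 ≤ B * k)
    (hbZ : ∀ᵐ ω ∂μ, ∑ a, Z ω a ^ 2 ≤ B * k) (α β : ℕ) :
    |∫ ω, dotProduct (Y ω) (Y ω) ^ α * dotProduct (Z ω) (Z ω) ^ β *
        dotProduct (Y ω) (Z ω) ∂μ| ≤ (B * k) ^ (α + β) := by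
  have hBk : (0:ℝ) ≤ B * k := by positivity
  have packY := asbound (μ := μ) (B := B) hbY
  have packZ := asbound (μ := μ) (B := B) hbZ
  set v : Fin k → ℝ := fun a => ∫ ω, dotProduct (Y ω) (Y ω) ^ α * Y ω a ∂μ with hv
  set w : Fin k → ℝ := fun a => ∫ ω, dotProduct (Z ω) (Z ω) ^ β * Z ω a ∂μ with hw
  have hvN := norm_Ev_le hB hY hisoY hbY α v fun a => rfl
  have hwN := norm_Ev_le hB hZ hisoZ hbZ β w fun a => rfl
  have intA : ∀ a : Fin k,
      Integrable (fun ω => dotProduct (Y ω) (Y ω) ^ α * Y ω a) μ := by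
    intro a
    refine integrable_bdd ((((meas_dot hY hY).pow_const α)).mul (meas_coord hY a))
      (c := (B * k) ^ α * (1 + B * k)) ?_
    filter_upwards [packY] with ω ⟨h0, h1, h2⟩
    rw [abs_mul, abs_pow]
    exact mul_le_mul (pow_le_pow_left₀ (abs_nonneg _) (by rwa [abs_of_nonneg h0]) α)
      (h2 a) (abs_nonneg _) (by positivity)
  have intB : ∀ a : Fin k,
      Integrable (fun ω => dotProduct (Z ω) (Z ω) ^ β * Z ω a) μ := by
    intro a
    refine integrable_bdd ((((meas_dot hZ hZ).pow_const β)).mul (meas_coord hZ a))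
      (c := (B * k) ^ β * (1 + B * k)) ?_
    filter_upwards [packZ] with ω ⟨h0, h1, h2⟩
    rw [abs_mul, abs_pow]
    exact mul_le_mul (pow_le_pow_left₀ (abs_nonneg _) (by rwa [abs_of_nonneg h0]) β)
      (h2 a) (abs_nonneg _) (by positivity)
  have intAB : ∀ a : Fin k, Integrable (fun ω =>
      (dotProduct (Y ω) (Y ω) ^ α * Y ω a) *
        (dotProduct (Z ω) (Z ω) ^ β * Z ω a)) μ := by
    intro a
    refine integrable_bdd (((((meas_dot hY hY).pow_const α)).mul (meas_coord hY a)).mul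
      ((((meas_dot hZ hZ).pow_const β)).mul (meas_coord hZ a)))
      (c := ((B * k) ^ α * (1 + B * k)) * ((B * k) ^ β * (1 + B * k))) ?_
    filter_upwards [packY, packZ] with ω ⟨h0, h1, h2⟩ ⟨h0', h1', h2'⟩
    rw [abs_mul, abs_mul, abs_mul, abs_pow, abs_pow]
    refine mul_le_mul ?_ ?_ (by positivity) (by positivity)
    · exact mul_le_mul (pow_le_pow_left₀ (abs_nonneg _) (by rwa [abs_of_nonneg h0]) α)
        (h2 a) (abs_nonneg _) (by positivity)
    · exact mul_le_mul (pow_le_pow_left₀ (abs_nonneg _) (by rwa [abs_of_nonneg h0']) β)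
        (h2' a) (abs_nonneg _) (by positivity)
  have hpt : ∀ ω, dotProduct (Y ω) (Y ω) ^ α * dotProduct (Z ω) (Z ω) ^ β *
      dotProduct (Y ω) (Z ω)
      = ∑ a, (dotProduct (Y ω) (Y ω) ^ α * Y ω a) *
          (dotProduct (Z ω) (Z ω) ^ β * Z ω a) := by
    intro ω
    have hd : dotProduct (Y ω) (Z ω) = ∑ a, Y ω a * Z ω a := rfl
    rw [hd, Finset.mul_sum]
    exact Finset.sum_congr rfl fun a _ => by ring
  have heq : ∫ ω, dotProduct (Y ω) (Y ω) ^ α * dotProduct (Z ω) (Z ω) ^ β *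
      dotProduct (Y ω) (Z ω) ∂μ = ∑ a, v a * w a := by
    simp_rw [hpt]
    rw [integral_finset_sum _ fun a _ => intAB a]
    refine Finset.sum_congr rfl fun a _ => ?_
    have hφ : Measurable fun x : Fin k → ℝ => dotProduct x x ^ α * x a := by
      refine Measurable.mul (Measurable.pow_const ?_ α) (measurable_pi_apply a)
      simp only [dotProduct]
      exact Finset.measurable_sum _ fun i _ => (measurable_pi_apply i).mul (measurable_pi_apply i)
    have hψ : Measurable fun x : Fin k → ℝ => dotProduct x x ^ β * x a := by
      refine Measurable.mul (Measurable.pow_const ?_ β) (measurable_pi_apply a)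
      simp only [dotProduct]
      exact Finset.measurable_sum _ fun i _ => (measurable_pi_apply i).mul (measurable_pi_apply i)
    have hI : IndepFun (fun ω => dotProduct (Y ω) (Y ω) ^ α * Y ω a)
        (fun ω => dotProduct (Z ω) (Z ω) ^ β * Z ω a) μ := hind.comp hφ hψ
    exact hI.integral_fun_mul_eq_mul_integral (intA a).aestronglyMeasurable (intB a).aestronglyMeasurable
  rw [heq]
  have hcs : (∑ a, v a * w a) ^ 2 ≤ (((B * k) ^ α) ^ 2) * (((B * k) ^ β) ^ 2) :=
    le_trans (Finset.sum_mul_sq_le_sq_mul_sq Finset.univ v w)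
      (mul_le_mul hvN hwN (Finset.sum_nonneg fun a _ => sq_nonneg _) (by positivity))
  have h2 : (∑ a, v a * w a) ^ 2 ≤ ((B * k) ^ (α + β)) ^ 2 := by
    calc (∑ a, v a * w a) ^ 2 ≤ (((B * k) ^ α) ^ 2) * (((B * k) ^ β) ^ 2) := hcs
      _ = ((B * k) ^ (α + β)) ^ 2 := by rw [pow_add]; ring
  nlinarith [abs_nonneg (∑ a, v a * w a), sq_abs (∑ a, v a * w a),
    pow_nonneg hBk (α + β)]

end MonBounds
section MonBounds2

variable {Ω : Type} [MeasurableSpace Ω] {μ : Measure Ω} {k : ℕ} {B : ℝ}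

lemma mon_bound_big [IsProbabilityMeasure μ] (hB : 0 < B) {Y Z : Ω → Fin k → ℝ}
    (hY : Measurable Y) (hZ : Measurable Z) (hind : IndepFun Y Z μ)
    (hisoY : ∀ a b, ∫ ω, Y ω a * Y ω b ∂μ = if a = b then 1 else 0)
    (hisoZ : ∀ a b, ∫ ω, Z ω a * Z ω b ∂μ = if a = b then 1 else 0)
    (hbY : ∀ᵐ ω ∂μ, ∑ a, Y ω a ^ 2 ≤ B * k)
    (hbZ : ∀ᵐ ω ∂μ, ∑ a, Z ω a ^ 2 ≤ B * k) (α β d : ℕ) :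
    |∫ ω, dotProduct (Y ω) (Y ω) ^ α * dotProduct (Z ω) (Z ω) ^ β *
        dotProduct (Y ω) (Z ω) ^ (d + 2) ∂μ| ≤ (B * k) ^ (α + β + d) * k := by
  have hBk : (0:ℝ) ≤ B * k := by positivity
  have packY := asbound (μ := μ) (B := B) hbY
  have packZ := asbound (μ := μ) (B := B) hbZ
  have hcr := cross_bound (μ := μ) hB hbY hbZ
  set f : Ω → ℝ := fun ω => dotProduct (Y ω) (Y ω) ^ α *
    dotProduct (Z ω) (Z ω) ^ β * dotProduct (Y ω) (Z ω) ^ (d + 2) with hf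
  have mf : Measurable f := (((meas_dot hY hY).pow_const α).mul
    ((meas_dot hZ hZ).pow_const β)).mul ((meas_dot hY hZ).pow_const (d + 2))
  have hdom : ∀ᵐ ω ∂μ, |f ω| ≤ (B * k) ^ (α + β + d) * dotProduct (Y ω) (Z ω) ^ 2 := by
    filter_upwards [packY, packZ, hcr] with ω ⟨hY0, hY1, _⟩ ⟨hZ0, hZ1, _⟩ hR
    have habs : |f ω| = dotProduct (Y ω) (Y ω) ^ α * dotProduct (Z ω) (Z ω) ^ β *
        (|dotProduct (Y ω) (Z ω)| ^ d * dotProduct (Y ω) (Z ω) ^ 2) := by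
      rw [hf, abs_mul, abs_mul, abs_pow, abs_pow, abs_pow, abs_of_nonneg hY0,
        abs_of_nonneg hZ0, pow_add, sq_abs]
    rw [habs]
    calc dotProduct (Y ω) (Y ω) ^ α * dotProduct (Z ω) (Z ω) ^ β *
          (|dotProduct (Y ω) (Z ω)| ^ d * dotProduct (Y ω) (Z ω) ^ 2)
        ≤ (B * k) ^ α * (B * k) ^ β *
          ((B * k) ^ d * dotProduct (Y ω) (Z ω) ^ 2) := by
          gcongr
      _ = (B * k) ^ (α + β + d) * dotProduct (Y ω) (Z ω) ^ 2 := by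
          rw [pow_add, pow_add]; ring
  have intR2 : Integrable (fun ω => dotProduct (Y ω) (Z ω) ^ 2) μ := by
    refine integrable_bdd ((meas_dot hY hZ).pow_const 2) (c := (B * k) ^ 2) ?_
    filter_upwards [hcr] with ω hR
    rw [abs_pow]
    exact pow_le_pow_left₀ (abs_nonneg _) hR 2
  have intf : Integrable f μ := by
    refine integrable_bdd mf (c := (B * k) ^ (α + β + d) * (B * k) ^ 2) ?_
    filter_upwards [hdom, hcr] with ω h1 h2
    refine le_trans h1 (mul_le_mul_of_nonneg_left ?_ (by positivity))
    calc dotProduct (Y ω) (Z ω) ^ 2 = |dotProduct (Y ω) (Z ω)| ^ 2 :=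
          (sq_abs _).symm
      _ ≤ (B * k) ^ 2 := pow_le_pow_left₀ (abs_nonneg _) h2 2
  calc |∫ ω, f ω ∂μ| ≤ ∫ ω, |f ω| ∂μ := by
        simpa [Real.norm_eq_abs] using norm_integral_le_integral_norm (μ := μ) f
    _ ≤ ∫ ω, (B * k) ^ (α + β + d) * dotProduct (Y ω) (Z ω) ^ 2 ∂μ :=
        integral_mono_ae intf.abs (intR2.const_mul _) hdom
    _ = (B * k) ^ (α + β + d) * ∫ ω, dotProduct (Y ω) (Z ω) ^ 2 ∂μ :=
        MeasureTheory.integral_const_mul _ _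
    _ = (B * k) ^ (α + β + d) * k := by
        rw [er2 hB hY hZ hind hisoY hisoZ hbY hbZ]

lemma mon_bound [IsProbabilityMeasure μ] (hB : 0 < B) {Y Z : Ω → Fin k → ℝ}
    (hY : Measurable Y) (hZ : Measurable Z) (hind : IndepFun Y Z μ)
    (hisoY : ∀ a b, ∫ ω, Y ω a * Y ω b ∂μ = if a = b then 1 else 0)
    (hisoZ : ∀ a b, ∫ ω, Z ω a * Z ω b ∂μ = if a = b then 1 else 0)
    (hbY : ∀ᵐ ω ∂μ, ∑ a, Y ω a ^ 2 ≤ B * k)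
    (hbZ : ∀ᵐ ω ∂μ, ∑ a, Z ω a ^ 2 ≤ B * k) (m : ℕ × ℕ × ℕ) (hodd : Odd m.2.2) :
    |∫ ω, mEval m (dotProduct (Y ω) (Y ω)) (dotProduct (Z ω) (Z ω))
        (dotProduct (Y ω) (Z ω)) ∂μ|
      ≤ (max 1 B * k) ^ (m.1 + m.2.1 + m.2.2 - 1) := by
  have hBk : (0:ℝ) ≤ B * k := by positivity
  have hmax1 : (1:ℝ) ≤ max 1 B := le_max_left 1 B
  have hBmax : B ≤ max 1 B := le_max_right 1 B
  obtain ⟨α, β, γ⟩ := m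
  obtain ⟨d, rfl⟩ := hodd
  simp only [mEval] at *
  match d with
  | 0 =>
    have h := mon_bound_one hB hY hZ hind hisoY hisoZ hbY hbZ α β
    have hrw : (∫ ω, dotProduct (Y ω) (Y ω) ^ α * dotProduct (Z ω) (Z ω) ^ β *
        dotProduct (Y ω) (Z ω) ^ (2 * 0 + 1) ∂μ)
        = ∫ ω, dotProduct (Y ω) (Y ω) ^ α * dotProduct (Z ω) (Z ω) ^ β *
        dotProduct (Y ω) (Z ω) ∂μ := by norm_num
    rw [hrw]
    refine le_trans h ?_
    have : α + β + (2 * 0 + 1) - 1 = α + β := by omega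
    rw [this]
    exact pow_le_pow_left₀ hBk (mul_le_mul_of_nonneg_right hBmax (Nat.cast_nonneg k)) _
  | (e + 1) =>
    have h := mon_bound_big hB hY hZ hind hisoY hisoZ hbY hbZ α β (2 * e + 1)
    have hrw : 2 * (e + 1) + 1 = (2 * e + 1) + 2 := by omega
    rw [hrw]
    refine le_trans h ?_
    have hE : α + β + (2 * e + 1 + 2) - 1 = (α + β + (2 * e + 1)) + 1 := by omega
    rw [hE]
    set E := α + β + (2 * e + 1) with hEdef
    calc (B * k) ^ E * k ≤ (max 1 B * k) ^ E * k := by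
          refine mul_le_mul_of_nonneg_right
            (pow_le_pow_left₀ hBk (mul_le_mul_of_nonneg_right hBmax (Nat.cast_nonneg k)) _)
            (Nat.cast_nonneg k)
      _ ≤ (max 1 B * k) ^ E * (max 1 B * k) := by
          refine mul_le_mul_of_nonneg_left ?_ (by positivity)
          nlinarith [Nat.cast_nonneg (α := ℝ) k]
      _ = (max 1 B * k) ^ (E + 1) := (pow_succ _ _).symm

end MonBounds2
section Final

variable {Ω : Type} [MeasurableSpace Ω] {μ : Measure Ω} {k : ℕ} {B : ℝ}

lemma integrable_mon [IsProbabilityMeasure μ] (hB : 0 < B) {Y Z : Ω → Fin k → ℝ}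
    (hY : Measurable Y) (hZ : Measurable Z)
    (hbY : ∀ᵐ ω ∂μ, ∑ a, Y ω a ^ 2 ≤ B * k)
    (hbZ : ∀ᵐ ω ∂μ, ∑ a, Z ω a ^ 2 ≤ B * k) (m : ℕ × ℕ × ℕ) :
    Integrable (fun ω => mEval m (dotProduct (Y ω) (Y ω))
      (dotProduct (Z ω) (Z ω)) (dotProduct (Y ω) (Z ω))) μ := by
  have hBk : (0:ℝ) ≤ B * k := by positivity
  have packY := asbound (μ := μ) (B := B) hbY
  have packZ := asbound (μ := μ) (B := B) hbZ
  have hcr := cross_bound (μ := μ) hB hbY hbZ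
  refine integrable_bdd ?_ (c := (B * k) ^ m.1 * (B * k) ^ m.2.1 * (B * k) ^ m.2.2) ?_
  · exact (((meas_dot hY hY).pow_const m.1).mul ((meas_dot hZ hZ).pow_const m.2.1)).mul
      ((meas_dot hY hZ).pow_const m.2.2)
  · filter_upwards [packY, packZ, hcr] with ω ⟨hY0, hY1, _⟩ ⟨hZ0, hZ1, _⟩ hR
    simp only [mEval]
    rw [abs_mul, abs_mul, abs_pow, abs_pow, abs_pow]
    have hS : |dotProduct (Y ω) (Y ω)| ≤ B * k := by rwa [abs_of_nonneg hY0]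
    have hT : |dotProduct (Z ω) (Z ω)| ≤ B * k := by rwa [abs_of_nonneg hZ0]
    exact mul_le_mul
      (mul_le_mul (pow_le_pow_left₀ (abs_nonneg _) hS _) (pow_le_pow_left₀ (abs_nonneg _) hT _)
        (by positivity) (by positivity))
      (pow_le_pow_left₀ (abs_nonneg _) hR _) (by positivity) (by positivity)

end Final

theorem expectation_power_kernel_bound (B : ℝ) (hB : 0 < B) (j : ℕ) (hj : 1 ≤ j) :
    ∃ C : ℝ, 0 ≤ C ∧
      ∀ (k : ℕ) (Ω : Type) (_ : MeasurableSpace Ω) (μ : Measure Ω)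
        (_ : IsProbabilityMeasure μ) (X₃ X₄ : Ω → Fin k → ℝ),
        Measurable X₃ → Measurable X₄ →
        IndepFun X₃ X₄ μ → IdentDistrib X₃ X₄ μ μ →
        (∀ a b, ∫ ω, X₃ ω a * X₃ ω b ∂μ = if a = b then 1 else 0) →
        (∀ᵐ ω ∂μ, ∑ a, (X₃ ω a) ^ 2 ≤ B * k) →
        (∀ᵐ ω ∂μ, ∑ a, (X₄ ω a) ^ 2 ≤ B * k) →
        (∑ a, (∫ ω, X₃ ω a ∂μ) ^ 2 ≤ B) →
        |∫ ω, dotProduct (X₃ ω)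
            (((Matrix.vecMulVec (X₃ ω) (X₃ ω) + Matrix.vecMulVec (X₄ ω) (X₄ ω)) ^ j).mulVec
              (X₄ ω)) ∂μ|
          ≤ C * (k : ℝ) ^ j := by
  refine ⟨2 ^ (j + 1) * (max 1 B) ^ j, by positivity, ?_⟩
  intro k Ω mΩ μ hprob Y Z hY hZ hind hid hiso hbY hbZ _hmean
  have hisoZ : ∀ a b, ∫ ω, Z ω a * Z ω b ∂μ = if a = b then 1 else 0 := by
    intro a b
    have hu : Measurable fun x : Fin k → ℝ => x a * x b :=
      (measurable_pi_apply a).mul (measurable_pi_apply b)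
    have h2 : ∫ ω, Y ω a * Y ω b ∂μ = ∫ ω, Z ω a * Z ω b ∂μ := (hid.comp hu).integral_eq
    rw [← h2]
    exact hiso a b
  have hrw : (fun ω => dotProduct (Y ω)
      (((Matrix.vecMulVec (Y ω) (Y ω) + Matrix.vecMulVec (Z ω) (Z ω)) ^ j).mulVec (Z ω)))
      = fun ω => ((polys (j + 1)).1.map (fun m => mEval m (dotProduct (Y ω) (Y ω))
          (dotProduct (Z ω) (Z ω)) (dotProduct (Y ω) (Z ω)))).sum :=
    funext fun ω => key_dot (Y ω) (Z ω) j
  rw [hrw]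
  obtain ⟨_, hsum⟩ := multiset_integral_sum (μ := μ) (polys (j + 1)).1
    (fun m ω => mEval m (dotProduct (Y ω) (Y ω)) (dotProduct (Z ω) (Z ω))
      (dotProduct (Y ω) (Z ω)))
    (fun m _ => integrable_mon hB hY hZ hbY hbZ m)
  rw [hsum]
  have hbound : ∀ m ∈ (polys (j + 1)).1,
      |∫ ω, mEval m (dotProduct (Y ω) (Y ω)) (dotProduct (Z ω) (Z ω))
        (dotProduct (Y ω) (Z ω)) ∂μ| ≤ (max 1 B * k) ^ j := by
    intro m hm
    obtain ⟨hdeg, hodd⟩ := (polys_deg (j + 1)).1 m hm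
    have h := mon_bound hB hY hZ hind hiso hisoZ hbY hbZ m hodd
    rwa [hdeg, Nat.add_sub_cancel] at h
  calc |(Multiset.map (fun m => ∫ ω, mEval m (dotProduct (Y ω) (Y ω))
          (dotProduct (Z ω) (Z ω)) (dotProduct (Y ω) (Z ω)) ∂μ)
          (polys (j + 1)).1).sum|
      ≤ (polys (j + 1)).1.card * (max 1 B * k) ^ j :=
        multiset_abs_sum_le _ _ (by positivity) hbound
    _ ≤ 2 ^ (j + 1) * (max 1 B * k) ^ j := by
        refine mul_le_mul_of_nonneg_right ?_ (by positivity)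
        have := (polys_card (j + 1)).1
        calc ((polys (j + 1)).1.card : ℝ) ≤ ((2 ^ (j + 1) : ℕ) : ℝ) := Nat.cast_le.mpr this
          _ = 2 ^ (j + 1) := by push_cast; ring
    _ = 2 ^ (j + 1) * (max 1 B) ^ j * (k : ℝ) ^ j := by rw [mul_pow]; ring
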